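/- arXiv:1911.04438 — 3 statements merged into one kernel-verified Lean document; each statement's English description precedes it below -/
import Mathlib

section
/- (Proposition 3.17, flat version: convergence of interpolating lengths.) Let −1 < α < 1 and let γ : [a,b] → ℝ^{n+1} (a < b) be an η^α-causal curve parameterized by the time coordinate, i.e. (γ(t))₀ = t for all t ∈ [a,b]. For each integer k ≥ 1 set t_j = a + j(b−a)/k for j = 0,1,…,k. Then lim_{k→∞} Σ_{j=1}^{k} √(max(0, −η^α(γ(t_j) − γ(t_{j−1})))) = L_{η^α}(γ). -/
open MeasureTheory Set Filter Topology
open scoped ENNReal NNReal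

noncomputable section

/-- `ℝ^{n+1}` with the Euclidean norm. -/
abbrev Esp (n : ℕ) : Type := EuclideanSpace ℝ (Fin (n + 1))

/-- The standard basis vector `e_μ` of `ℝ^{n+1}`. -/
def ee (n : ℕ) (μ : Fin (n + 1)) : Esp n := EuclideanSpace.single μ (1 : ℝ)

/-- The quadratic form `η^α(X) = -((1-α)/(1+α))·X₀² + ∑_{i=1}^n Xᵢ²`. -/
def etaQ (n : ℕ) (α : ℝ) (X : Esp n) : ℝ :=
  -((1 - α) / (1 + α)) * X 0 ^ 2 + ∑ i ∈ Finset.univ.erase (0 : Fin (n + 1)), X i ^ 2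

/-- The standard Minkowski bilinear form `η(v,w) = -v₀w₀ + ∑_{i=1}^n vᵢwᵢ`. -/
def etaB (n : ℕ) (v w : Esp n) : ℝ :=
  -(v 0 * w 0) + ∑ i ∈ Finset.univ.erase (0 : Fin (n + 1)), v i * w i

/-- A curve is locally Lipschitz on `s` if it is Lipschitz on every compact subset of `s`. -/
def LocLipOn (n : ℕ) (γ : ℝ → Esp n) (s : Set ℝ) : Prop :=
  ∀ K, K ⊆ s → IsCompact K → ∃ C : NNReal, LipschitzOnWith C γ K

/-- An `η^α`-causal curve on `s`: locally Lipschitz, and for a.e. `t ∈ s` it is differentiable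
with `η^α(γ'(t)) ≤ 0` and `(γ'(t))₀ > 0`. -/
def EtaCausalOn (n : ℕ) (α : ℝ) (γ : ℝ → Esp n) (s : Set ℝ) : Prop :=
  LocLipOn n γ s ∧
    ∀ᵐ t ∂(volume.restrict s),
      DifferentiableAt ℝ γ t ∧ etaQ n α (deriv γ t) ≤ 0 ∧ 0 < deriv γ t 0

/-- An `η^α`-timelike curve on `s`: locally Lipschitz, and there is `δ > 0` such that for a.e.
`t ∈ s` it is differentiable with `η^α(γ'(t)) < -δ` and `(γ'(t))₀ > 0`. -/
def EtaTimelikeOn (n : ℕ) (α : ℝ) (γ : ℝ → Esp n) (s : Set ℝ) : Prop :=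
  LocLipOn n γ s ∧
    ∃ δ : ℝ, 0 < δ ∧
      ∀ᵐ t ∂(volume.restrict s),
        DifferentiableAt ℝ γ t ∧ etaQ n α (deriv γ t) < -δ ∧ 0 < deriv γ t 0

/-- `I⁺_{η^α}(p, U)`: endpoints of `η^α`-timelike curves in `U` starting at `p`. -/
def EtaIplus (n : ℕ) (α : ℝ) (p : Esp n) (U : Set (Esp n)) : Set (Esp n) :=
  {q | ∃ a b : ℝ, ∃ γ : ℝ → Esp n, a < b ∧ EtaTimelikeOn n α γ (Icc a b) ∧
        MapsTo γ (Icc a b) U ∧ γ a = p ∧ γ b = q}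

/-- The Euclidean cone `C⁺_ε(p,U)`. -/
def ConeP (n : ℕ) (ε : ℝ) (p : Esp n) (U : Set (Esp n)) : Set (Esp n) :=
  {q | q ∈ U ∧ q ≠ p ∧ Real.sqrt ((1 + ε) / 2) < (q - p) 0 / ‖q - p‖}

/-- `g` assigns to each point a symmetric bilinear form with continuous components on `U`. -/
def IsSymmCont (n : ℕ) (g : Esp n → Esp n →ₗ[ℝ] Esp n →ₗ[ℝ] ℝ) (U : Set (Esp n)) : Prop :=
  (∀ x ∈ U, ∀ v w : Esp n, g x v w = g x w v) ∧
    ∀ μ ν : Fin (n + 1), ContinuousOn (fun x => g x (ee n μ) (ee n ν)) U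

/-- `g` is Lorentzian on `U`: at each point it is linearly equivalent to the Minkowski form. -/
def IsLorentzian (n : ℕ) (g : Esp n → Esp n →ₗ[ℝ] Esp n →ₗ[ℝ] ℝ) (U : Set (Esp n)) : Prop :=
  ∀ x ∈ U, ∃ L : Esp n ≃ₗ[ℝ] Esp n, ∀ v w : Esp n, g x (L v) (L w) = etaB n v w

/-- `T` is a time orientation for `g` on `U`. -/
def IsTimeOrientation (n : ℕ) (g : Esp n → Esp n →ₗ[ℝ] Esp n →ₗ[ℝ] ℝ)
    (T : Esp n → Esp n) (U : Set (Esp n)) : Prop :=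
  ContinuousOn T U ∧ ∀ x ∈ U, g x (T x) (T x) < 0

/-- `X` is future-directed causal at `x` (w.r.t. the time orientation `T`). -/
def FDCausal (n : ℕ) (g : Esp n → Esp n →ₗ[ℝ] Esp n →ₗ[ℝ] ℝ) (T : Esp n → Esp n)
    (x X : Esp n) : Prop :=
  X ≠ 0 ∧ g x X X ≤ 0 ∧ g x (T x) X < 0

/-- A `g`-causal curve on `s` with values in `U`. -/
def GCausalOn (n : ℕ) (g : Esp n → Esp n →ₗ[ℝ] Esp n →ₗ[ℝ] ℝ) (T : Esp n → Esp n)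
    (U : Set (Esp n)) (γ : ℝ → Esp n) (s : Set ℝ) : Prop :=
  LocLipOn n γ s ∧ MapsTo γ s U ∧
    ∀ᵐ t ∂(volume.restrict s),
      DifferentiableAt ℝ γ t ∧ FDCausal n g T (γ t) (deriv γ t)

/-- A `g`-timelike curve on `s` with values in `U`. -/
def GTimelikeOn (n : ℕ) (g : Esp n → Esp n →ₗ[ℝ] Esp n →ₗ[ℝ] ℝ) (T : Esp n → Esp n)
    (U : Set (Esp n)) (γ : ℝ → Esp n) (s : Set ℝ) : Prop :=
  LocLipOn n γ s ∧ MapsTo γ s U ∧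
    ∃ δ : ℝ, 0 < δ ∧
      ∀ᵐ t ∂(volume.restrict s),
        DifferentiableAt ℝ γ t ∧
          g (γ t) (deriv γ t) (deriv γ t) < -δ ∧ g (γ t) (T (γ t)) (deriv γ t) < 0

/-- `I⁺_g(p,U)`: endpoints of `g`-timelike curves in `U` starting at `p`. -/
def GIplus (n : ℕ) (g : Esp n → Esp n →ₗ[ℝ] Esp n →ₗ[ℝ] ℝ) (T : Esp n → Esp n)
    (p : Esp n) (U : Set (Esp n)) : Set (Esp n) :=
  {q | ∃ a b : ℝ, ∃ γ : ℝ → Esp n, a < b ∧ GTimelikeOn n g T U γ (Icc a b) ∧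
        γ a = p ∧ γ b = q}

/-- `J⁺_g(p,U)`: `p` together with endpoints of `g`-causal curves in `U` starting at `p`. -/
def GJplus (n : ℕ) (g : Esp n → Esp n →ₗ[ℝ] Esp n →ₗ[ℝ] ℝ) (T : Esp n → Esp n)
    (p : Esp n) (U : Set (Esp n)) : Set (Esp n) :=
  insert p
    {q | ∃ a b : ℝ, ∃ γ : ℝ → Esp n, a < b ∧ GCausalOn n g T U γ (Icc a b) ∧
          γ a = p ∧ γ b = q}

/-- Lorentzian length `L_g(γ)` of a curve on `[a,b]`. -/
def Lg (n : ℕ) (g : Esp n → Esp n →ₗ[ℝ] Esp n →ₗ[ℝ] ℝ) (γ : ℝ → Esp n) (a b : ℝ) : ℝ :=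
  ∫ t in a..b, Real.sqrt (max 0 (-(g (γ t) (deriv γ t) (deriv γ t))))

/-- Euclidean length of a curve on `[a,b]`. -/
def Leuc (n : ℕ) (γ : ℝ → Esp n) (a b : ℝ) : ℝ :=
  ∫ t in a..b, ‖deriv γ t‖

/-- `η^α`-Lorentzian length of a curve on `[a,b]`. -/
def Leta (n : ℕ) (α : ℝ) (γ : ℝ → Esp n) (a b : ℝ) : ℝ :=
  ∫ t in a..b, Real.sqrt (max 0 (-(etaQ n α (deriv γ t))))


lemma lip_real_ftc {C : NNReal} {f : ℝ → ℝ} (hf : LipschitzWith C f) :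
    ∃ d : ℝ → ℝ, Measurable d ∧ (∀ᵐ t, HasDerivAt f (d t) t) ∧
      ∀ x y : ℝ, x ≤ y → ∫ t in x..y, d t = f y - f x := by
  have hcont : Continuous f := hf.continuous
  have hdist : ∀ s t : ℝ, s ≤ t → |f t - f s| ≤ C * (t - s) := by
    intro s t hst
    have := hf.dist_le_mul t s
    rw [Real.dist_eq, Real.dist_eq] at this
    calc |f t - f s| ≤ C * |t - s| := this
      _ = C * (t - s) := by rw [abs_of_nonneg (by linarith)]
  have hmono : Monotone (fun t => (C : ℝ) * t + f t) := by
    intro s t hst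
    have h1 := hdist s t hst
    have h2 := abs_le.1 h1
    simp only
    nlinarith [h2.1]
  set S : StieltjesFunction ℝ :=
    { toFun := fun t => (C : ℝ) * t + f t
      mono' := hmono
      right_continuous' := fun x =>
        ((continuous_const.mul continuous_id).add hcont).continuousWithinAt } with hSdef
  have hSapp : ∀ t, S t = (C : ℝ) * t + f t := fun t => rfl
  -- the complementary monotone function
  have hmono2 : Monotone (fun t => (C : ℝ) * t - f t) := by
    intro s t hst
    have h1 := hdist s t hst
    have h2 := abs_le.1 h1
    simp only
    nlinarith [h2.2]
  set T : StieltjesFunction ℝ :=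
    { toFun := fun t => (C : ℝ) * t - f t
      mono' := hmono2
      right_continuous' := fun x =>
        ((continuous_const.mul continuous_id).sub hcont).continuousWithinAt } with hTdef
  have hsum : S.measure + T.measure = (2 * C : ℝ≥0) • (volume : Measure ℝ) := by
    refine (Measure.ext_of_Ioc ((2 * C : ℝ≥0) • (volume : Measure ℝ))
      (S.measure + T.measure) (fun u v huv => ?_)).symm
    rw [Measure.add_apply, StieltjesFunction.measure_Ioc, StieltjesFunction.measure_Ioc,
      Measure.smul_apply, Real.volume_Ioc, ENNReal.smul_def, smul_eq_mul]
    have h1 : (0:ℝ) ≤ (C : ℝ) * v + f v - ((C : ℝ) * u + f u) := by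
      have := hmono huv.le; simpa using this
    have h2 : (0:ℝ) ≤ (C : ℝ) * v - f v - ((C : ℝ) * u - f u) := by
      have := hmono2 huv.le; simpa using this
    rw [← ENNReal.ofReal_add h1 h2, ← ENNReal.ofReal_coe_nnreal, ← ENNReal.ofReal_mul (by positivity)]
    symm
    congr 1
    push_cast
    ring
  have hle : S.measure ≤ (2 * C : ℝ≥0) • (volume : Measure ℝ) := by
    rw [← hsum]; exact Measure.le_add_right le_rfl
  have hac : S.measure ≪ (volume : Measure ℝ) :=
    (Measure.absolutelyContinuous_of_le hle).trans (by simpa [ENNReal.smul_def] using (Measure.smul_absolutelyContinuous (c := ((2 * C : ℝ≥0) : ℝ≥0∞)) (μ := (volume : Measure ℝ))))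
  haveI : SigmaFinite S.measure := by infer_instance
  set d0 : ℝ → ℝ := fun t => (S.measure.rnDeriv volume t).toReal with hd0
  have hd0meas : Measurable d0 := (Measure.measurable_rnDeriv _ _).ennreal_toReal
  have hSderiv := S.ae_hasDerivAt
  refine ⟨fun t => d0 t - C, hd0meas.sub measurable_const, ?_, ?_⟩
  · filter_upwards [hSderiv] with x hx
    have h1 : HasDerivAt (fun t => S t - (C:ℝ) * t) (d0 x - C) x :=
      hx.sub (by simpa using ((hasDerivAt_id x).const_mul (C : ℝ)))
    have h2 : (fun t => S t - (C:ℝ) * t) = f := by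
      funext t; rw [hSapp]; ring
    rwa [h2] at h1
  · intro x y hxy
    have hint0 : IntegrableOn d0 (Ioc x y) volume := by
      refine integrable_toReal_of_lintegral_ne_top
        (Measure.measurable_rnDeriv _ _).aemeasurable ?_
      rw [Measure.setLIntegral_rnDeriv hac]
      exact (lt_of_le_of_lt (le_refl _)
        (by rw [StieltjesFunction.measure_Ioc]; exact ENNReal.ofReal_lt_top)).ne
    have key : ∫ t in x..y, d0 t = S y - S x := by
      rw [intervalIntegral.integral_of_le hxy,
        Measure.setIntegral_toReal_rnDeriv hac (Ioc x y), measureReal_def,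
        StieltjesFunction.measure_Ioc, ENNReal.toReal_ofReal (by have := hmono hxy; simpa using this)]
    have : ∫ t in x..y, (d0 t - (C:ℝ)) = (∫ t in x..y, d0 t) - ∫ t in x..y, (C:ℝ) := by
      apply intervalIntegral.integral_sub
      · rw [intervalIntegrable_iff_integrableOn_Ioc_of_le hxy]; exact hint0
      · exact intervalIntegrable_const
    rw [this, key, intervalIntegral.integral_const, hSapp, hSapp]
    simp only [smul_eq_mul]
    ring

lemma coord_abs_le_norm {n : ℕ} (v : Esp n) (μ : Fin (n + 1)) : |v μ| ≤ ‖v‖ := by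
  rw [EuclideanSpace.norm_eq]
  have h1 : |v μ| = Real.sqrt (‖v μ‖ ^ 2) := by
    rw [Real.sqrt_sq_eq_abs]; simp
  rw [h1]
  apply Real.sqrt_le_sqrt
  exact Finset.single_le_sum (f := fun i => ‖v i‖ ^ 2) (fun i _ => by positivity)
    (Finset.mem_univ μ)

lemma bdd_integrableOn {E : Type*} [NormedAddCommGroup E] {f : ℝ → E} {s : Set ℝ} {M : ℝ}
    (hm : AEStronglyMeasurable f (volume.restrict s)) (hs : volume s ≠ ⊤)
    (hb : ∀ᵐ t ∂(volume : Measure ℝ), ‖f t‖ ≤ M) : IntegrableOn f s := by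
  haveI : IsFiniteMeasure ((volume : Measure ℝ).restrict s) :=
    ⟨by rw [Measure.restrict_apply_univ s]; exact hs.lt_top⟩
  exact ⟨hm, HasFiniteIntegral.of_bounded (C := M) (ae_restrict_of_ae hb)⟩

lemma lip_vec_ftc {n : ℕ} {C : NNReal} {G : ℝ → Esp n} (hG : LipschitzWith C G) :
    ∃ D : ℝ → Esp n, Measurable D ∧ (∀ᵐ t ∂(volume : Measure ℝ), HasDerivAt G (D t) t ∧ ‖D t‖ ≤ C) ∧
      ∀ x y : ℝ, x ≤ y → G y - G x = ∫ t in x..y, D t := by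
  classical
  have hcoord : ∀ μ : Fin (n + 1), LipschitzWith C (fun t => G t μ) := by
    intro μ
    intro s t
    refine le_trans ?_ (hG s t)
    rw [edist_dist, edist_dist]
    apply ENNReal.ofReal_le_ofReal
    rw [dist_eq_norm, dist_eq_norm]
    exact (coord_abs_le_norm (G s - G t) μ).trans_eq' (by simp [Real.norm_eq_abs])
  choose d hdmeas hdae hdftc using fun μ => lip_real_ftc (hcoord μ)
  set D : ℝ → Esp n := fun t => (EuclideanSpace.equiv (Fin (n + 1)) ℝ).symm (fun μ => d μ t)
    with hD
  have hDapp : ∀ t μ, D t μ = d μ t := fun t μ => rfl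
  have hDmeas : Measurable D := by
    apply Continuous.measurable (EuclideanSpace.equiv (Fin (n + 1)) ℝ).symm.continuous |>.comp
    exact measurable_pi_lambda _ fun μ => hdmeas μ
  have hDae : ∀ᵐ t ∂(volume : Measure ℝ), HasDerivAt G (D t) t := by
    have := ae_all_iff.2 hdae
    filter_upwards [this] with t ht
    have h1 : HasDerivAt (fun s => (EuclideanSpace.equiv (Fin (n + 1)) ℝ) (G s))
        (fun μ => d μ t) t := hasDerivAt_pi.2 fun μ => ht μ
    have h2 := ((EuclideanSpace.equiv (Fin (n + 1)) ℝ).symm : (Fin (n+1) → ℝ) ≃L[ℝ] Esp n)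
      |>.hasFDerivAt.comp_hasDerivAt t h1
    exact h2
  refine ⟨D, hDmeas, ?_, ?_⟩
  · filter_upwards [hDae] with t ht
    refine ⟨ht, ?_⟩
    have := norm_deriv_le_of_lipschitz (𝕜 := ℝ) hG (x₀ := t)
    rwa [ht.deriv] at this
  · intro x y hxy
    have hDint : IntervalIntegrable D volume x y := by
      rw [intervalIntegrable_iff_integrableOn_Ioc_of_le hxy]
      refine bdd_integrableOn (M := C) hDmeas.aestronglyMeasurable (by simp) ?_
      filter_upwards [hDae] with t ht
      have := norm_deriv_le_of_lipschitz (𝕜 := ℝ) hG (x₀ := t)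
      rwa [ht.deriv] at this
    ext μ
    have h1 := (EuclideanSpace.proj μ : Esp n →L[ℝ] ℝ).intervalIntegral_comp_comm hDint
      (a := x) (b := y)
    have h2 : (∫ t in x..y, D t) μ = ∫ t in x..y, d μ t := by
      have h3 : (EuclideanSpace.proj μ : Esp n →L[ℝ] ℝ) (∫ t in x..y, D t)
          = ∫ t in x..y, (EuclideanSpace.proj μ : Esp n →L[ℝ] ℝ) (D t) := h1.symm
      simpa [hDapp] using h3
    show G y μ - G x μ = _
    rw [h2, hdftc μ x y hxy]


lemma etaQ_continuous (n : ℕ) (α : ℝ) : Continuous (etaQ n α) := by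
  have hc : ∀ i : Fin (n + 1), Continuous fun v : Esp n => v i := fun i =>
    (EuclideanSpace.proj i : Esp n →L[ℝ] ℝ).continuous
  exact (continuous_const.mul ((hc 0).pow 2)).add
    (continuous_finset_sum _ fun i _ => (hc i).pow 2)

lemma etaQ_smul (n : ℕ) (α : ℝ) (r : ℝ) (v : Esp n) :
    etaQ n α (r • v) = r ^ 2 * etaQ n α v := by
  unfold etaQ
  simp only [PiLp.smul_apply, smul_eq_mul, mul_pow, ← Finset.mul_sum]
  ring

lemma sqrtF_smul (n : ℕ) (α : ℝ) {r : ℝ} (hr : 0 ≤ r) (v : Esp n) :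
    Real.sqrt (max 0 (-(etaQ n α (r • v)))) = r * Real.sqrt (max 0 (-(etaQ n α v))) := by
  rw [etaQ_smul]
  have h1 : max 0 (-(r ^ 2 * etaQ n α v)) = r ^ 2 * max 0 (-(etaQ n α v)) := by
    rw [mul_max_of_nonneg _ _ (sq_nonneg r), mul_zero, mul_neg]
  rw [h1, Real.sqrt_mul (sq_nonneg r), Real.sqrt_sq hr]

lemma sqrtF_le {n : ℕ} {α : ℝ} (hα : -1 < α) (hα1 : α < 1) (v : Esp n) :
    Real.sqrt (max 0 (-(etaQ n α v))) ≤ Real.sqrt ((1 - α) / (1 + α)) * ‖v‖ := by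
  set c : ℝ := (1 - α) / (1 + α) with hc
  have hc0 : 0 ≤ c := div_nonneg (by linarith) (by linarith)
  have h1 : max 0 (-(etaQ n α v)) ≤ c * v 0 ^ 2 := by
    have hs : 0 ≤ ∑ i ∈ Finset.univ.erase (0 : Fin (n + 1)), v i ^ 2 :=
      Finset.sum_nonneg fun i _ => sq_nonneg _
    refine max_le (by positivity) ?_
    unfold etaQ
    rw [← hc]
    linarith
  calc Real.sqrt (max 0 (-(etaQ n α v))) ≤ Real.sqrt (c * v 0 ^ 2) := Real.sqrt_le_sqrt h1
    _ = Real.sqrt c * |v 0| := by rw [Real.sqrt_mul hc0, Real.sqrt_sq_eq_abs]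
    _ ≤ Real.sqrt c * ‖v‖ :=
        mul_le_mul_of_nonneg_left (coord_abs_le_norm v 0) (Real.sqrt_nonneg _)


set_option maxHeartbeats 2000000 in
/-- Proposition 3.17, flat version: convergence of interpolating lengths. -/
theorem stmt_12 (n : ℕ) (hn : 1 ≤ n) (α : ℝ) (hα : -1 < α) (hα1 : α < 1)
    (a b : ℝ) (hab : a < b) (γ : ℝ → Esp n)
    (hγ : EtaCausalOn n α γ (Icc a b))
    (htime : ∀ t ∈ Icc a b, γ t 0 = t) :
    Tendsto (fun k : ℕ =>
        ∑ j ∈ Finset.range k,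
          Real.sqrt (max 0 (-(etaQ n α
            (γ (a + ((j : ℝ) + 1) * (b - a) / (k : ℝ)) -
              γ (a + (j : ℝ) * (b - a) / (k : ℝ)))))))
      atTop (nhds (Leta n α γ a b)) := by
  classical
  have hba : 0 < b - a := sub_pos.2 hab
  obtain ⟨C, hC⟩ := hγ.1 (Icc a b) Subset.rfl isCompact_Icc
  set G : ℝ → Esp n := fun t => γ (min (max t a) b) with hGdef
  have hclamp_mem : ∀ t : ℝ, min (max t a) b ∈ Icc a b := fun t =>
    ⟨le_min (le_max_right _ _) hab.le, min_le_right _ _⟩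
  have hclamp_eq : ∀ t ∈ Icc a b, min (max t a) b = t := by
    intro t ht
    rw [max_eq_left ht.1, min_eq_left ht.2]
  have hGeq : ∀ t ∈ Icc a b, G t = γ t := by
    intro t ht; rw [hGdef]; simp only; rw [hclamp_eq t ht]
  have hclamp_lip : LipschitzWith 1 (fun t : ℝ => min (max t a) b) :=
    (LipschitzWith.id.max_const a).min_const b
  have hGlip : LipschitzWith C G := by
    have h0 := hC.comp (hclamp_lip.lipschitzOnWith (s := univ)) (fun t _ => hclamp_mem t)
    rw [mul_one] at h0
    exact lipschitzOnWith_univ.1 h0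
  obtain ⟨D, hDmeas, hDae, hFTC⟩ := lip_vec_ftc hGlip
  set c : ℝ := (1 - α) / (1 + α) with hcdef
  have hc0 : 0 ≤ c := div_nonneg (by linarith) (by linarith)
  set F : Esp n → ℝ := fun v => Real.sqrt (max 0 (-(etaQ n α v))) with hFdef
  have hFcont : Continuous F :=
    Real.continuous_sqrt.comp (continuous_const.max (etaQ_continuous n α).neg)
  have hFbound : ∀ v, F v ≤ Real.sqrt c * ‖v‖ := fun v => sqrtF_le hα hα1 v
  have hF0 : ∀ v, 0 ≤ F v := fun v => Real.sqrt_nonneg _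
  set Δ : ℕ → ℝ := fun k => (b - a) / k with hΔdef
  set pt : ℕ → ℕ → ℝ := fun k j => a + j * (b - a) / k with hptdef
  have hptΔ : ∀ k j, pt k j = a + j * Δ k := by
    intro k j; rw [hptdef, hΔdef]; ring
  have hpt_succ : ∀ k j, pt k (j + 1) = pt k j + Δ k := by
    intro k j; rw [hptΔ, hptΔ]; push_cast; ring
  have hΔpos : ∀ k : ℕ, 1 ≤ k → 0 < Δ k := by
    intro k hk
    exact div_pos hba (by exact_mod_cast Nat.pos_of_ne_zero (by omega))
  have hpt0 : ∀ k, pt k 0 = a := by intro k; simp [hptdef]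
  have hptk : ∀ k : ℕ, 1 ≤ k → pt k k = b := by
    intro k hk
    have hk0 : (k : ℝ) ≠ 0 := by exact_mod_cast Nat.pos_of_ne_zero (by omega) |>.ne'
    rw [hptdef]; field_simp; ring
  have hpt_mono : ∀ k j, pt k j ≤ pt k (j + 1) := by
    intro k j
    rw [hpt_succ]
    rcases Nat.eq_zero_or_pos k with hk | hk
    · simp [hΔdef, hk]
    · linarith [hΔpos k hk]
  have hpt_mem : ∀ k j : ℕ, 1 ≤ k → j ≤ k → pt k j ∈ Icc a b := by
    intro k j hk hjk
    have hkpos : (0:ℝ) < k := by exact_mod_cast Nat.pos_of_ne_zero (by omega)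
    constructor
    · rw [hptΔ]
      have : 0 ≤ (j : ℝ) * Δ k := mul_nonneg (by positivity) (hΔpos k hk).le
      linarith
    · rw [hptdef]
      have hj : (j : ℝ) ≤ k := by exact_mod_cast hjk
      have h2 : (j : ℝ) * (b - a) / k ≤ b - a := by
        rw [div_le_iff₀ hkpos]; nlinarith
      linarith
  set Av : ℕ → ℕ → Esp n := fun k j => (Δ k)⁻¹ • ∫ t in pt k j..pt k (j + 1), D t with hAvdef
  set jdx : ℕ → ℝ → ℕ := fun k t => ⌊(t - a) / Δ k⌋₊ with hjdef
  set w : ℕ → ℝ → Esp n := fun k t => Av k (jdx k t) with hwdef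
  have hDbd : ∀ᵐ t ∂(volume : Measure ℝ), ‖D t‖ ≤ C := by
    filter_upwards [hDae] with t ht using ht.2
  have hDii : ∀ u v : ℝ, IntervalIntegrable D volume u v := by
    intro u v
    rw [intervalIntegrable_iff]
    exact bdd_integrableOn (M := C) hDmeas.aestronglyMeasurable
      (show volume (uIoc u v) ≠ ⊤ by
        rw [uIoc, Real.volume_Ioc]; exact ENNReal.ofReal_ne_top) hDbd
  have hIN : ∀ u v : ℝ, u ≤ v → ‖∫ t in u..v, D t‖ ≤ (v - u) * C := by
    intro u v huv
    rw [intervalIntegral.integral_of_le huv]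
    calc ‖∫ t in Ioc u v, D t‖ ≤ ∫ t in Ioc u v, ‖D t‖ := norm_integral_le_integral_norm D
      _ ≤ ∫ _ in Ioc u v, (C : ℝ) := by
          apply integral_mono_ae ((intervalIntegrable_iff_integrableOn_Ioc_of_le huv).1
            (hDii u v)).norm (integrable_const _) (ae_restrict_of_ae hDbd)
      _ = (v - u) * C := by
          rw [setIntegral_const, measureReal_def, Real.volume_Ioc, smul_eq_mul,
            ENNReal.toReal_ofReal (by linarith)]
  have hAvnorm : ∀ k j, ‖Av k j‖ ≤ C := by
    intro k j
    rcases Nat.eq_zero_or_pos k with hk | hk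
    · simp [hAvdef, hΔdef, hk]
    · have hΔ := hΔpos k hk
      rw [hAvdef]
      simp only
      rw [norm_smul, norm_inv, Real.norm_eq_abs, abs_of_pos hΔ]
      have h1 := hIN (pt k j) (pt k (j+1)) (hpt_mono k j)
      have h2 : pt k (j+1) - pt k j = Δ k := by rw [hpt_succ]; ring
      rw [h2] at h1
      calc (Δ k)⁻¹ * ‖∫ t in pt k j..pt k (j+1), D t‖ ≤ (Δ k)⁻¹ * (Δ k * C) :=
            mul_le_mul_of_nonneg_left h1 (by positivity)
        _ = C := by field_simp
  have hchord : ∀ k j : ℕ, 1 ≤ k → j + 1 ≤ k →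
      γ (pt k (j + 1)) - γ (pt k j) = Δ k • Av k j := by
    intro k j hk hjk
    rw [← hGeq _ (hpt_mem k (j+1) hk hjk), ← hGeq _ (hpt_mem k j hk (by omega)),
      hFTC _ _ (hpt_mono k j), hAvdef]
    simp only
    rw [smul_inv_smul₀ (hΔpos k hk).ne']
  have hidx : ∀ k : ℕ, 1 ≤ k → ∀ j : ℕ, ∀ t ∈ Ico (pt k j) (pt k (j + 1)), jdx k t = j := by
    intro k hk j t ht
    have hΔ := hΔpos k hk
    rw [hjdef]
    simp only
    have h1 : (j : ℝ) ≤ (t - a) / Δ k := by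
      rw [le_div_iff₀ hΔ]
      have := ht.1; rw [hptΔ] at this; linarith
    have h2 : (t - a) / Δ k < j + 1 := by
      rw [div_lt_iff₀ hΔ]
      have := ht.2; rw [hptΔ] at this; push_cast; push_cast at this; nlinarith
    rw [Nat.floor_eq_iff (le_trans (by positivity) h1)]
    exact ⟨by exact_mod_cast h1, by exact_mod_cast h2⟩
  have hSk : ∀ k : ℕ, 1 ≤ k →
      (∑ j ∈ Finset.range k,
        Real.sqrt (max 0 (-(etaQ n α
          (γ (a + ((j : ℝ) + 1) * (b - a) / (k : ℝ)) -
            γ (a + (j : ℝ) * (b - a) / (k : ℝ)))))))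
      = ∫ t in a..b, F (w k t) := by
    intro k hk
    have hΔ := hΔpos k hk
    have hglob : ∀ j : ℕ, ∀ᵐ t ∂(volume : Measure ℝ),
        t ∈ Ioc (pt k j) (pt k (j + 1)) → F (w k t) = F (Av k j) := by
      intro j
      have hq : ∀ᵐ t ∂(volume : Measure ℝ), t ≠ pt k (j + 1) := by
        rw [ae_iff]
        have h0 : {t : ℝ | ¬t ≠ pt k (j + 1)} = {pt k (j + 1)} := by ext t; simp
        rw [h0]
        exact Real.volume_singleton
      filter_upwards [hq] with t hne ht
      have htI : t ∈ Ico (pt k j) (pt k (j + 1)) := ⟨ht.1.le, lt_of_le_of_ne ht.2 hne⟩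
      rw [hwdef]
      simp only
      rw [hidx k hk j t htI]
    have hint : ∀ j, j < k →
        IntervalIntegrable (fun t => F (w k t)) volume (pt k j) (pt k (j + 1)) := by
      intro j hj
      rw [intervalIntegrable_iff_integrableOn_Ioc_of_le (hpt_mono k j)]
      have hconst : IntegrableOn (fun _ => F (Av k j)) (Ioc (pt k j) (pt k (j + 1))) volume :=
        integrableOn_const (by rw [Real.volume_Ioc]; exact ENNReal.ofReal_ne_top)
      apply hconst.congr
      filter_upwards [ae_restrict_of_ae (hglob j), ae_restrict_mem measurableSet_Ioc]
        with t h1 h2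
      exact (h1 h2).symm
    have hval : ∀ j, j < k →
        ∫ t in pt k j..pt k (j + 1), F (w k t) = Δ k * F (Av k j) := by
      intro j hj
      have h1 : ∫ t in pt k j..pt k (j + 1), F (w k t)
          = ∫ _ in pt k j..pt k (j + 1), F (Av k j) := by
        apply intervalIntegral.integral_congr_ae
        rw [uIoc_of_le (hpt_mono k j)]
        exact hglob j
      rw [h1, intervalIntegral.integral_const, smul_eq_mul, hpt_succ]
      have h2 : pt k j + Δ k - pt k j = Δ k := by ring
      rw [h2]
    calc (∑ j ∈ Finset.range k,
        Real.sqrt (max 0 (-(etaQ n α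
          (γ (a + ((j : ℝ) + 1) * (b - a) / (k : ℝ)) -
            γ (a + (j : ℝ) * (b - a) / (k : ℝ)))))))
        = ∑ j ∈ Finset.range k, Δ k * F (Av k j) := by
          apply Finset.sum_congr rfl
          intro j hj
          rw [Finset.mem_range] at hj
          have e1 : a + ((j : ℝ) + 1) * (b - a) / (k : ℝ) = pt k (j + 1) := by
            rw [hptdef]; push_cast; ring
          have e2 : a + (j : ℝ) * (b - a) / (k : ℝ) = pt k j := by rw [hptdef]
          rw [e1, e2, hchord k j hk (by omega)]
          simp only [hFdef]
          exact sqrtF_smul n α hΔ.le (Av k j)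
      _ = ∑ j ∈ Finset.range k, ∫ t in pt k j..pt k (j + 1), F (w k t) :=
          Finset.sum_congr rfl fun j hj => (hval j (Finset.mem_range.1 hj)).symm
      _ = ∫ t in (pt k 0)..(pt k k), F (w k t) :=
          intervalIntegral.sum_integral_adjacent_intervals hint
      _ = ∫ t in a..b, F (w k t) := by rw [hpt0, hptk k hk]
  have hLeta : Leta n α γ a b = ∫ t in a..b, F (D t) := by
    unfold Leta
    apply intervalIntegral.integral_congr_ae
    have hne : ∀ᵐ t ∂(volume : Measure ℝ), t ≠ b := by
      rw [ae_iff]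
      have h0 : {t : ℝ | ¬t ≠ b} = {b} := by ext t; simp
      rw [h0]
      exact Real.volume_singleton
    filter_upwards [hDae, hne] with t ht htne htI
    rw [uIoc_of_le hab.le] at htI
    have htIoo : t ∈ Ioo a b := ⟨htI.1, lt_of_le_of_ne htI.2 htne⟩
    have hGg : G =ᶠ[𝓝 t] γ :=
      eventually_of_mem (Ioo_mem_nhds htIoo.1 htIoo.2)
        fun s hs => hGeq s (Ioo_subset_Icc_self hs)
    have hdg : deriv γ t = D t := by rw [← hGg.deriv_eq, ht.1.deriv]
    rw [hdg]
  have hmain : Tendsto (fun k => ∫ t in a..b, F (w k t)) atTop (𝓝 (∫ t in a..b, F (D t))) := by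
    have heq : ∀ g : ℝ → ℝ, (∫ t in a..b, g t) = ∫ t in Ioo a b, g t := fun g => by
      rw [intervalIntegral.integral_of_le hab.le, integral_Ioc_eq_integral_Ioo]
    haveI : IsFiniteMeasure ((volume : Measure ℝ).restrict (Ioo a b)) :=
      ⟨by rw [Measure.restrict_apply_univ, Real.volume_Ioo]; exact ENNReal.ofReal_lt_top⟩
    have hwmeas : ∀ k, AEStronglyMeasurable (fun t => F (w k t))
        ((volume : Measure ℝ).restrict (Ioo a b)) := by
      intro k
      have hjm : Measurable (jdx k) := by
        rw [hjdef]
        exact ((measurable_id.sub_const a).div_const (Δ k)).nat_floor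
      have hwm : Measurable (w k) := (measurable_from_top (f := fun m => Av k m)).comp hjm
      exact (hFcont.measurable.comp hwm).aestronglyMeasurable
    have hbd : ∀ k, ∀ᵐ t ∂((volume : Measure ℝ).restrict (Ioo a b)),
        ‖F (w k t)‖ ≤ Real.sqrt c * C := by
      intro k
      apply Eventually.of_forall
      intro t
      rw [Real.norm_eq_abs, abs_of_nonneg (hF0 _)]
      exact (hFbound _).trans (mul_le_mul_of_nonneg_left (hAvnorm k _) (Real.sqrt_nonneg _))
    have h6 : ∀ x : ℝ, ∃ᶠ r in 𝓝[>] (0 : ℝ),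
        volume (Metric.closedBall x (3 * r)) ≤ (6 : ℝ≥0) * volume (Metric.closedBall x r) := by
      intro x
      apply Eventually.frequently
      filter_upwards [self_mem_nhdsWithin] with r hr
      have hr0 : (0 : ℝ) < r := hr
      rw [Real.volume_closedBall, Real.volume_closedBall]
      calc ENNReal.ofReal (2 * (3 * r)) ≤ ENNReal.ofReal (6 * (2 * r)) :=
            ENNReal.ofReal_le_ofReal (by linarith)
        _ = ENNReal.ofReal 6 * ENNReal.ofReal (2 * r) :=
            ENNReal.ofReal_mul (by norm_num)
        _ = (6 : ℝ≥0) * ENNReal.ofReal (2 * r) := by norm_num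
    set v : VitaliFamily (volume : Measure ℝ) :=
      Vitali.vitaliFamily (volume : Measure ℝ) 6 h6 with hv
    have hDloc : LocallyIntegrable D volume := fun x =>
      ⟨Metric.closedBall x 1, Metric.closedBall_mem_nhds x one_pos,
        bdd_integrableOn hDmeas.aestronglyMeasurable
          (by rw [Real.volume_closedBall]; exact ENNReal.ofReal_ne_top) hDbd⟩
    have hVit := v.ae_tendsto_average_norm_sub hDloc
    have hlim : ∀ᵐ t ∂((volume : Measure ℝ).restrict (Ioo a b)),
        Tendsto (fun k => F (w k t)) atTop (𝓝 (F (D t))) := by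
      filter_upwards [ae_restrict_mem measurableSet_Ioo, ae_restrict_of_ae hVit] with x hxIoo hx
      have hwx : Tendsto (fun k => w k x) atTop (𝓝 (D x)) := by
        set s : ℕ → Set ℝ := fun k => Icc (pt k (jdx k x)) (pt k (jdx k x + 1)) with hs
        have hxmem : ∀ k, 1 ≤ k → pt k (jdx k x) ≤ x ∧ x ≤ pt k (jdx k x + 1) := by
          intro k hk
          have hΔ := hΔpos k hk
          have hr0 : 0 ≤ (x - a) / Δ k := div_nonneg (by linarith [hxIoo.1]) hΔ.le
          have h1 : ((jdx k x : ℕ) : ℝ) ≤ (x - a) / Δ k := by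
            rw [hjdef]; exact Nat.floor_le hr0
          have h2 : (x - a) / Δ k < (jdx k x : ℝ) + 1 := by
            rw [hjdef]; push_cast; exact Nat.lt_floor_add_one _
          constructor
          · rw [hptΔ]
            have := (le_div_iff₀ hΔ).1 h1
            linarith
          · rw [hptΔ]
            have := (div_lt_iff₀ hΔ).1 h2
            push_cast
            nlinarith
        have hsub : ∀ k, 1 ≤ k → s k ⊆ Metric.closedBall x (Δ k) := by
          intro k hk y hy
          have hxm := hxmem k hk
          have hq := hpt_succ k (jdx k x)
          rw [Real.closedBall_eq_Icc]
          constructor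
          · have := hy.1
            have h2 := hxm.2
            rw [hq] at h2
            linarith
          · have := hy.2
            rw [hq] at this
            linarith [hxm.1]
        have hmemv : ∀ k, 1 ≤ k → s k ∈ v.setsAt x := by
          intro k hk
          have hΔ := hΔpos k hk
          refine ⟨isClosed_Icc, ?_, Δ k, hsub k hk, ?_⟩
          · rw [interior_Icc]
            exact nonempty_Ioo.2 (by rw [hpt_succ]; linarith)
          · show volume (Metric.closedBall x (3 * Δ k)) ≤
              (6 : ℝ≥0) * volume (Icc (pt k (jdx k x)) (pt k (jdx k x + 1)))
            rw [Real.volume_closedBall, Real.volume_Icc, hpt_succ]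
            have h3 : pt k (jdx k x) + Δ k - pt k (jdx k x) = Δ k := by ring
            rw [h3]
            calc ENNReal.ofReal (2 * (3 * Δ k)) = ENNReal.ofReal (6 * Δ k) := by ring_nf
              _ = ENNReal.ofReal 6 * ENNReal.ofReal (Δ k) := ENNReal.ofReal_mul (by norm_num)
              _ = (6 : ℝ≥0) * ENNReal.ofReal (Δ k) := by norm_num
              _ ≤ (6 : ℝ≥0) * ENNReal.ofReal (Δ k) := le_rfl
        have hfilter : Tendsto s atTop (v.filterAt x) := by
          rw [VitaliFamily.tendsto_filterAt_iff]
          refine ⟨(eventually_ge_atTop 1).mono hmemv, fun ε hε => ?_⟩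
          have hΔ0 : Tendsto Δ atTop (𝓝 0) := tendsto_const_div_atTop_nhds_zero_nat (b - a)
          filter_upwards [eventually_ge_atTop 1, hΔ0.eventually (gt_mem_nhds hε)]
            with k hk hkε
          exact (hsub k hk).trans (Metric.closedBall_subset_closedBall hkε.le)
        have h1 : Tendsto (fun k => ⨍ y in s k, ‖D y - D x‖) atTop (𝓝 0) := hx.comp hfilter
        have h2 : ∀ k, 1 ≤ k → ‖w k x - D x‖ ≤ ⨍ y in s k, ‖D y - D x‖ := by
          intro k hk
          have hΔ := hΔpos k hk
          have hqp : pt k (jdx k x + 1) = pt k (jdx k x) + Δ k := hpt_succ _ _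
          have hpq : pt k (jdx k x) ≤ pt k (jdx k x + 1) := hpt_mono _ _
          have hIccInt : IntegrableOn D (s k) volume :=
            bdd_integrableOn hDmeas.aestronglyMeasurable
              (by rw [hs]; simp only; rw [Real.volume_Icc]; exact ENNReal.ofReal_ne_top) hDbd
          have hvol : (volume (s k)).toReal = Δ k := by
            rw [hs]; simp only; rw [Real.volume_Icc, hqp]
            rw [ENNReal.toReal_ofReal (by linarith)]
            ring
          have hwx_eq : w k x = (Δ k)⁻¹ • ∫ y in s k, D y := by
            rw [hwdef]; simp only; rw [hAvdef]; simp only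
            rw [intervalIntegral.integral_of_le hpq, hs]; simp only
            rw [integral_Icc_eq_integral_Ioc]
          have hconst : IntegrableOn (fun _ => D x) (s k) volume :=
            integrableOn_const (by
              rw [hs]; simp only; rw [Real.volume_Icc]; exact ENNReal.ofReal_ne_top)
          have hsplit : ∫ y in s k, (D y - D x) = (∫ y in s k, D y) - Δ k • D x := by
            rw [integral_sub hIccInt hconst, setIntegral_const, measureReal_def, hvol]
          have hdiff : w k x - D x = (Δ k)⁻¹ • ∫ y in s k, (D y - D x) := by
            rw [hsplit, smul_sub, ← hwx_eq, smul_smul, inv_mul_cancel₀ hΔ.ne', one_smul]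
          rw [hdiff, setAverage_eq, measureReal_def, hvol, norm_smul, norm_inv, Real.norm_eq_abs,
            abs_of_pos hΔ, smul_eq_mul]
          exact mul_le_mul_of_nonneg_left (norm_integral_le_integral_norm _) (by positivity)
        have h3 : Tendsto (fun k => w k x - D x) atTop (𝓝 0) :=
          squeeze_zero_norm' ((eventually_ge_atTop 1).mono h2) h1
        exact tendsto_sub_nhds_zero_iff.1 h3
      exact (hFcont.continuousAt).tendsto.comp hwx
    have hdct := tendsto_integral_of_dominated_convergence
      (μ := (volume : Measure ℝ).restrict (Ioo a b))
      (F := fun k t => F (w k t)) (f := fun t => F (D t))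
      (fun _ => Real.sqrt c * C) hwmeas (integrable_const _) hbd hlim
    rw [heq]
    exact Tendsto.congr (fun k => (heq fun t => F (w k t)).symm) hdct
  rw [hLeta]
  exact Tendsto.congr' ((eventually_ge_atTop 1).mono fun k hk => (hSk k hk).symm) hmain
end
end

section
/- (Lemma 3.18, chart version: comparison of Lorentzian lengths.) There exist a constant C > 0 and ε₁ ∈ (0, 3/5), depending only on n, with the following property: for every ε ∈ (0,ε₁), every open V ⊆ ℝ^{n+1}, every g as in the context satisfying |g(x)(e_μ,e_ν) − η(e_μ,e_ν)| < ε for all x ∈ V and all 0 ≤ μ,ν ≤ n, and every g-causal curve γ : [a,b] → V, one has |L_g(γ) − L_{η^{−ε}}(γ)| ≤ C·√ε·∫_a^b ‖γ'(t)‖ dt. -/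
open MeasureTheory Set Filter

noncomputable section

section AuxLemmas

lemma aux_sqrt_add {x y : ℝ} (hx : 0 ≤ x) (hy : 0 ≤ y) :
    Real.sqrt (x + y) ≤ Real.sqrt x + Real.sqrt y := by
  have h : x + y ≤ (Real.sqrt x + Real.sqrt y) ^ 2 := by
    have hx2 := Real.sq_sqrt hx
    have hy2 := Real.sq_sqrt hy
    nlinarith [Real.sqrt_nonneg x, Real.sqrt_nonneg y]
  calc Real.sqrt (x + y) ≤ Real.sqrt ((Real.sqrt x + Real.sqrt y) ^ 2) := Real.sqrt_le_sqrt h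
  _ = Real.sqrt x + Real.sqrt y := Real.sqrt_sq (by positivity)

lemma aux_sqrt_max_sub_le (a b : ℝ) :
    Real.sqrt (max 0 a) - Real.sqrt (max 0 b) ≤ Real.sqrt |a - b| := by
  have h1 : max 0 a ≤ max 0 b + |a - b| := by
    refine max_le (by positivity) ?_
    have h2 : a - b ≤ |a - b| := le_abs_self _
    have h3 : a ≤ b + |a - b| := by linarith
    exact h3.trans (add_le_add (le_max_right 0 b) le_rfl)
  have h2 : Real.sqrt (max 0 a) ≤ Real.sqrt (max 0 b) + Real.sqrt |a - b| :=
    (Real.sqrt_le_sqrt h1).trans (aux_sqrt_add (le_max_left 0 b) (abs_nonneg _))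
  linarith

lemma aux_sqrt_max_diff (a b : ℝ) :
    |Real.sqrt (max 0 a) - Real.sqrt (max 0 b)| ≤ Real.sqrt |a - b| := by
  rw [abs_sub_le_iff]
  constructor
  · exact aux_sqrt_max_sub_le a b
  · have := aux_sqrt_max_sub_le b a; rw [abs_sub_comm] at this; linarith

lemma esp_decomp (n : ℕ) (v : Esp n) : v = ∑ μ, v μ • ee n μ := by
  ext i
  rw [show ((∑ μ, v μ • ee n μ) i) = ∑ μ, (v μ • ee n μ) i by rw [WithLp.ofLp_sum]; exact Finset.sum_apply i Finset.univ _]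
  simp [ee, EuclideanSpace.single_apply]

lemma g_expand (n : ℕ) (G : Esp n →ₗ[ℝ] Esp n →ₗ[ℝ] ℝ) (v w : Esp n) :
    G v w = ∑ μ, ∑ ν, v μ * w ν * G (ee n μ) (ee n ν) := by
  conv_lhs => rw [esp_decomp n v, esp_decomp n w]
  simp only [_root_.map_sum, LinearMap.sum_apply, _root_.map_smul, LinearMap.smul_apply,
    smul_eq_mul, Finset.mul_sum]
  rw [Finset.sum_comm]
  exact Finset.sum_congr rfl fun μ _ => Finset.sum_congr rfl fun ν _ => by ring

lemma etaB_ee (n : ℕ) (μ ν : Fin (n + 1)) :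
    etaB n (ee n μ) (ee n ν) = if μ = ν then (if μ = 0 then -1 else 1) else 0 := by
  unfold etaB ee
  by_cases h : μ = ν
  · subst h
    by_cases h0 : μ = 0
    · subst h0
      rw [Finset.sum_eq_zero (fun i hi => by
        simp [EuclideanSpace.single_apply, Finset.ne_of_mem_erase hi])]
      simp [EuclideanSpace.single_apply]
    · have heq : ∀ i ∈ Finset.univ.erase (0 : Fin (n+1)),
          (EuclideanSpace.single μ (1:ℝ)) i * (EuclideanSpace.single μ (1:ℝ)) i
            = if i = μ then 1 else 0 := fun i _ => by
        rw [EuclideanSpace.single_apply]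
        by_cases hi : i = μ <;> simp [hi]
      rw [Finset.sum_congr rfl heq, Finset.sum_ite_eq' (Finset.univ.erase 0) μ (fun _ => (1:ℝ))]
      simp [EuclideanSpace.single_apply, h0, Ne.symm h0]
  · have heq : ∀ i ∈ Finset.univ.erase (0 : Fin (n+1)),
        (EuclideanSpace.single μ (1:ℝ)) i * (EuclideanSpace.single ν (1:ℝ)) i = 0 := fun i _ => by
      rw [EuclideanSpace.single_apply, EuclideanSpace.single_apply]
      by_cases hiμ : i = μ
      · have : ¬ i = ν := fun hiν => h (hiμ ▸ hiν)
        simp [hiμ, this, h]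
      · simp [hiμ]
    rw [Finset.sum_eq_zero heq]
    by_cases hμ0 : μ = 0
    · subst hμ0
      simp [EuclideanSpace.single_apply, h, fun h' : (0:Fin (n+1)) = ν => h h']
    · simp [EuclideanSpace.single_apply, h, Ne.symm hμ0]

lemma norm_sq_esp (n : ℕ) (v : Esp n) : ‖v‖ ^ 2 = ∑ μ, v μ ^ 2 := by
  rw [PiLp.norm_sq_eq_of_L2]; simp [sq_abs]

lemma etaB_diag (n : ℕ) (v : Esp n) :
    etaB n v v = ∑ μ, v μ * v μ * (if μ = 0 then -1 else 1) := by
  rw [← Finset.sum_erase_add _ _ (Finset.mem_univ (0 : Fin (n+1)))]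
  unfold etaB
  rw [Finset.sum_congr rfl (fun i hi =>
    show v i * v i * (if i = 0 then (-1:ℝ) else 1) = v i * v i by
      simp [Finset.ne_of_mem_erase hi])]
  simp; ring

lemma etaB_expand (n : ℕ) (v : Esp n) :
    etaB n v v = ∑ μ, ∑ ν, v μ * v ν * etaB n (ee n μ) (ee n ν) := by
  rw [etaB_diag]
  refine Finset.sum_congr rfl fun μ _ => ?_
  rw [Finset.sum_congr rfl (fun ν _ => by rw [etaB_ee])]
  rw [Finset.sum_congr rfl (fun ν _ =>
    show v μ * v ν * (if μ = ν then (if μ = 0 then (-1:ℝ) else 1) else 0)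
        = if ν = μ then v μ * v ν * (if μ = 0 then -1 else 1) else 0 by
      by_cases hν : ν = μ
      · simp [hν]
      · have hμν : ¬ μ = ν := fun h => hν h.symm
        simp [hν, hμν])]
  rw [Finset.sum_ite_eq' Finset.univ μ (fun ν => v μ * v ν * (if μ = 0 then (-1:ℝ) else 1))]
  simp

lemma cauchy_esp (n : ℕ) (v : Esp n) :
    (∑ μ, |v μ|) ^ 2 ≤ ((n : ℝ) + 1) * ‖v‖ ^ 2 := by
  have h := sq_sum_le_card_mul_sum_sq (s := (Finset.univ : Finset (Fin (n+1))))
    (f := fun μ => |v μ|)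
  simp only [Finset.card_univ, Fintype.card_fin, sq_abs] at h
  rw [norm_sq_esp]
  calc (∑ μ, |v μ|) ^ 2 ≤ ((n+1 : ℕ) : ℝ) * ∑ μ, v μ ^ 2 := h
  _ = ((n : ℝ) + 1) * ∑ μ, v μ ^ 2 := by push_cast; ring

lemma key_bound (n : ℕ) {ε : ℝ} (hε0 : 0 < ε) (hε : ε < 1/2)
    (G : Esp n →ₗ[ℝ] Esp n →ₗ[ℝ] ℝ)
    (hG : ∀ μ ν, |G (ee n μ) (ee n ν) - etaB n (ee n μ) (ee n ν)| ≤ ε) (X : Esp n) :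
    |G X X - etaQ n (-ε) X| ≤ ((n : ℝ) + 6) * ε * ‖X‖ ^ 2 := by
  have hX0 : X 0 ^ 2 ≤ ‖X‖ ^ 2 := by
    rw [norm_sq_esp]
    exact Finset.single_le_sum (fun i _ => sq_nonneg (X i)) (Finset.mem_univ 0)
  have h1 : |G X X - etaB n X X| ≤ ((n:ℝ)+1) * ε * ‖X‖^2 := by
    rw [g_expand n G X X, etaB_expand n X, ← Finset.sum_sub_distrib]
    have hterm : ∀ μ ν : Fin (n+1),
        |X μ * X ν * G (ee n μ) (ee n ν) - X μ * X ν * etaB n (ee n μ) (ee n ν)|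
          ≤ |X μ| * |X ν| * ε := fun μ ν => by
      rw [← mul_sub, abs_mul, abs_mul]
      exact mul_le_mul_of_nonneg_left (hG μ ν) (by positivity)
    have hsum : ∑ μ, ∑ ν, |X μ| * |X ν| * ε = (∑ μ, |X μ|) ^ 2 * ε := by
      rw [sq, Finset.sum_mul_sum, Finset.sum_mul]
      exact Finset.sum_congr rfl fun μ _ => by rw [Finset.sum_mul]
    calc |∑ μ, (∑ ν, X μ * X ν * G (ee n μ) (ee n ν) - ∑ ν, X μ * X ν * etaB n (ee n μ) (ee n ν))|
        ≤ ∑ μ, |∑ ν, X μ * X ν * G (ee n μ) (ee n ν) - ∑ ν, X μ * X ν * etaB n (ee n μ) (ee n ν)| :=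
          Finset.abs_sum_le_sum_abs _ _
      _ ≤ ∑ μ, ∑ ν, |X μ| * |X ν| * ε := by
          refine Finset.sum_le_sum fun μ _ => ?_
          rw [← Finset.sum_sub_distrib]
          exact (Finset.abs_sum_le_sum_abs _ _).trans (Finset.sum_le_sum fun ν _ => hterm μ ν)
      _ = (∑ μ, |X μ|) ^ 2 * ε := hsum
      _ ≤ (((n:ℝ)+1) * ‖X‖^2) * ε := mul_le_mul_of_nonneg_right (cauchy_esp n X) hε0.le
      _ = ((n:ℝ)+1) * ε * ‖X‖^2 := by ring
  have h2 : |etaB n X X - etaQ n (-ε) X| ≤ 5 * ε * ‖X‖^2 := by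
    have hS : ∑ i ∈ Finset.univ.erase (0 : Fin (n+1)), X i * X i
        = ∑ i ∈ Finset.univ.erase (0 : Fin (n+1)), X i ^ 2 :=
      Finset.sum_congr rfl fun i _ => (sq (X i)).symm
    have heq : etaB n X X - etaQ n (-ε) X = ((1+ε)/(1-ε) - 1) * X 0 ^ 2 := by
      unfold etaB etaQ
      rw [hS]
      ring
    have hc0 : (0:ℝ) ≤ (1+ε)/(1-ε) - 1 := by
      rw [sub_nonneg, le_div_iff₀ (by linarith)]
      linarith
    have hc : (1+ε)/(1-ε) - 1 ≤ 4 * ε := by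
      rw [div_sub_one (by linarith : (1:ℝ) - ε ≠ 0), div_le_iff₀ (by linarith)]
      nlinarith
    rw [heq, abs_mul, abs_of_nonneg hc0, abs_of_nonneg (sq_nonneg _)]
    calc ((1+ε)/(1-ε) - 1) * X 0 ^ 2 ≤ (4*ε) * ‖X‖^2 := by
          apply mul_le_mul hc hX0 (sq_nonneg _) (by positivity)
      _ ≤ 5 * ε * ‖X‖^2 := by nlinarith [sq_nonneg ‖X‖]
  calc |G X X - etaQ n (-ε) X| ≤ |G X X - etaB n X X| + |etaB n X X - etaQ n (-ε) X| :=
        abs_sub_le _ _ _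
    _ ≤ ((n:ℝ)+1) * ε * ‖X‖^2 + 5 * ε * ‖X‖^2 := add_le_add h1 h2
    _ = ((n:ℝ)+6) * ε * ‖X‖^2 := by ring

lemma etaQ_max_bound (n : ℕ) {ε : ℝ} (hε0 : 0 ≤ ε) (hε : ε < 1/2) (X : Esp n) :
    max 0 (-(etaQ n (-ε) X)) ≤ 4 * ‖X‖ ^ 2 := by
  have hX0 : X 0 ^ 2 ≤ ‖X‖ ^ 2 := by
    rw [norm_sq_esp]
    exact Finset.single_le_sum (fun i _ => sq_nonneg (X i)) (Finset.mem_univ 0)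
  refine max_le (by positivity) ?_
  unfold etaQ
  have hSnn : (0:ℝ) ≤ ∑ i ∈ Finset.univ.erase (0 : Fin (n+1)), X i ^ 2 :=
    Finset.sum_nonneg fun i _ => sq_nonneg _
  have hc : (1 - (-ε)) / (1 + (-ε)) ≤ 4 := by
    rw [div_le_iff₀ (by linarith)]
    linarith
  have h4 : (1 - (-ε)) / (1 + (-ε)) * X 0 ^ 2 ≤ 4 * X 0 ^ 2 :=
    mul_le_mul_of_nonneg_right hc (sq_nonneg _)
  nlinarith

lemma aesm_finset_sum {ι : Type*} (s : Finset ι) {μ : MeasureTheory.Measure ℝ} (f : ι → ℝ → ℝ)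
    (h : ∀ i ∈ s, AEStronglyMeasurable (f i) μ) :
    AEStronglyMeasurable (fun t => ∑ i ∈ s, f i t) μ := by
  classical
  induction s using Finset.induction with
  | empty => simpa using aestronglyMeasurable_const
  | @insert j s hj ih =>
      simp only [Finset.sum_insert hj]
      exact (h j (Finset.mem_insert_self j s)).add
        (ih fun i hi => h i (Finset.mem_insert_of_mem hi))

end AuxLemmas

/-- Lemma 3.18, chart version: comparison of Lorentzian lengths. -/

theorem stmt_13 (n : ℕ) (hn : 1 ≤ n) :
    ∃ C : ℝ, 0 < C ∧ ∃ ε₁ : ℝ, 0 < ε₁ ∧ ε₁ < 3 / 5 ∧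
      ∀ ε : ℝ, 0 < ε → ε < ε₁ →
        ∀ V : Set (Esp n), IsOpen V →
          ∀ g : Esp n → Esp n →ₗ[ℝ] Esp n →ₗ[ℝ] ℝ, IsSymmCont n g V →
            (∀ x ∈ V, ∀ μ ν : Fin (n + 1),
              |g x (ee n μ) (ee n ν) - etaB n (ee n μ) (ee n ν)| < ε) →
            ∀ a b : ℝ, a ≤ b → ∀ γ : ℝ → Esp n,
              GCausalOn n g (fun _ => ee n 0) V γ (Icc a b) →
              |Lg n g γ a b - Leta n (-ε) γ a b| ≤ C * Real.sqrt ε * Leuc n γ a b := by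
  
  classical
  refine ⟨Real.sqrt ((n:ℝ)+6), Real.sqrt_pos.2 (by positivity), 1/2, by norm_num, by norm_num, ?_⟩
  intro ε hε0 hε1 V hV g hgsc hgclose a b hab γ hγ
  obtain ⟨hlip, hmaps, hae⟩ := hγ
  obtain ⟨L, hL⟩ := hlip (Icc a b) Subset.rfl isCompact_Icc
  have hεhalf : ε < 1/2 := hε1
  set C : ℝ := Real.sqrt ((n:ℝ)+6) with hCdef
  set d : ℝ → Esp n := deriv γ with hddef
  set f : ℝ → ℝ := fun t => Real.sqrt (max 0 (-(g (γ t) (d t) (d t)))) with hfdef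
  set h : ℝ → ℝ := fun t => Real.sqrt (max 0 (-(etaQ n (-ε) (d t)))) with hhdef
  have hCnn : 0 ≤ C * Real.sqrt ε := by positivity
  -- pointwise key estimate
  have hkey : ∀ t ∈ Icc a b, |g (γ t) (d t) (d t) - etaQ n (-ε) (d t)|
      ≤ ((n:ℝ)+6) * ε * ‖d t‖^2 := fun t ht =>
    key_bound n hε0 hεhalf (g (γ t)) (fun μ ν => (hgclose (γ t) (hmaps ht) μ ν).le) (d t)
  have hptwise : ∀ t ∈ Icc a b, |f t - h t| ≤ C * Real.sqrt ε * ‖d t‖ := by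
    intro t ht
    refine (aux_sqrt_max_diff _ _).trans ?_
    have habs : |(-(g (γ t) (d t) (d t))) - (-(etaQ n (-ε) (d t)))|
        = |g (γ t) (d t) (d t) - etaQ n (-ε) (d t)| := by
      rw [neg_sub_neg, abs_sub_comm]
    rw [habs]
    calc Real.sqrt |g (γ t) (d t) (d t) - etaQ n (-ε) (d t)|
        ≤ Real.sqrt (((n:ℝ)+6) * ε * ‖d t‖^2) := Real.sqrt_le_sqrt (hkey t ht)
      _ = C * Real.sqrt ε * ‖d t‖ := by
          rw [Real.sqrt_mul (by positivity), Real.sqrt_mul (by positivity),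
            Real.sqrt_sq (norm_nonneg _)]
  -- a.e. facts
  have hIoo : ∀ᵐ t ∂(volume.restrict (Icc a b)), t ∈ Ioo a b := by
    rw [ae_iff]
    rw [Measure.restrict_apply (by exact measurableSet_Ioo.compl : MeasurableSet {t : ℝ | ¬ t ∈ Ioo a b})]
    refine measure_mono_null ?_ ((Set.finite_singleton a |>.insert b).measure_zero volume)
    rintro x ⟨hxc, hxI⟩
    rcases eq_or_lt_of_le hxI.1 with h1 | h1
    · exact Or.inr (Set.mem_singleton_iff.2 h1.symm)
    rcases eq_or_lt_of_le hxI.2 with h2 | h2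
    · exact Or.inl h2
    exact absurd ⟨h1, h2⟩ hxc
  have hmemIcc : ∀ᵐ t ∂(volume.restrict (Icc a b)), t ∈ Icc a b :=
    ae_restrict_mem measurableSet_Icc
  have hdbound : ∀ᵐ t ∂(volume.restrict (Icc a b)), ‖d t‖ ≤ (L:ℝ) := by
    filter_upwards [hIoo] with t ht
    have hnhds : Icc a b ∈ nhds t := Icc_mem_nhds ht.1 ht.2
    have h1 : ‖fderiv ℝ γ t‖ ≤ (L:ℝ) := norm_fderiv_le_of_lipschitzOn ℝ hnhds hL
    calc ‖d t‖ = ‖fderiv ℝ γ t 1‖ := by rw [hddef]; rw [fderiv_apply_one_eq_deriv]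
      _ ≤ ‖fderiv ℝ γ t‖ * ‖(1:ℝ)‖ := ContinuousLinearMap.le_opNorm _ _
      _ ≤ (L:ℝ) * 1 := by rw [norm_one]; exact mul_le_mul_of_nonneg_right h1 zero_le_one
      _ = (L:ℝ) := mul_one _
  -- measurability
  have hγcont : ContinuousOn γ (Icc a b) := hL.continuousOn
  have hdm : AEStronglyMeasurable d (volume.restrict (Icc a b)) :=
    (measurable_deriv γ).aestronglyMeasurable
  have hdμ : ∀ μ0 : Fin (n+1), AEStronglyMeasurable (fun t => d t μ0)
      (volume.restrict (Icc a b)) := fun μ0 =>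
    (PiLp.continuous_apply 2 _ μ0).comp_aestronglyMeasurable hdm
  have hgm : AEStronglyMeasurable (fun t => g (γ t) (d t) (d t))
      (volume.restrict (Icc a b)) := by
    have hexp : (fun t => g (γ t) (d t) (d t))
        = fun t => ∑ μ, ∑ ν, d t μ * d t ν * g (γ t) (ee n μ) (ee n ν) :=
      funext fun t => g_expand n (g (γ t)) (d t) (d t)
    rw [hexp]
    refine aesm_finset_sum _ _ fun μ _ => aesm_finset_sum _ _ fun ν _ => ?_
    exact ((hdμ μ).mul (hdμ ν)).mul
      (((hgsc.2 μ ν).comp hγcont hmaps).aestronglyMeasurable measurableSet_Icc)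
  have houter : Continuous fun x : ℝ => Real.sqrt (max 0 (-x)) :=
    (continuous_const.max continuous_neg).sqrt
  have hfm : AEStronglyMeasurable f (volume.restrict (Icc a b)) :=
    houter.comp_aestronglyMeasurable hgm
  have hetaQcont : Continuous fun X : Esp n => etaQ n (-ε) X := by
    unfold etaQ
    exact (continuous_const.mul (by fun_prop : Continuous fun X : Esp n => X 0 ^ 2)).add
      (continuous_finset_sum (f := fun i (X : Esp n) => X i ^ 2) _ fun i _ => by fun_prop)
  have hhm : AEStronglyMeasurable h (volume.restrict (Icc a b)) :=
    ((continuous_const.max hetaQcont.neg).sqrt).comp_aestronglyMeasurable hdm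
  -- integrability
  have hconst : ∀ c : ℝ, IntegrableOn (fun _ : ℝ => c) (Icc a b) volume := fun c =>
    integrableOn_const measure_Icc_lt_top.ne
  have hnormint : IntegrableOn (fun t => ‖d t‖) (Icc a b) volume := by
    refine Integrable.mono' (hconst (L:ℝ)) hdm.norm ?_
    filter_upwards [hdbound] with t ht
    rwa [norm_norm]
  have hfb : ∀ᵐ t ∂(volume.restrict (Icc a b)), ‖f t‖ ≤ Real.sqrt ((n:ℝ)+7) * (L:ℝ) := by
    filter_upwards [hdbound, hmemIcc] with t htL htI
    have hq := etaQ_max_bound n hε0.le hεhalf (d t)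
    have hk := hkey t htI
    have hmb : max 0 (-(g (γ t) (d t) (d t))) ≤ ((n:ℝ)+7) * ‖d t‖^2 := by
      have h5 : -(g (γ t) (d t) (d t)) ≤ -(etaQ n (-ε) (d t))
          + |g (γ t) (d t) (d t) - etaQ n (-ε) (d t)| := by
        have := le_abs_self (etaQ n (-ε) (d t) - g (γ t) (d t) (d t))
        rw [abs_sub_comm] at this
        linarith
      have h6 : -(etaQ n (-ε) (d t)) ≤ max 0 (-(etaQ n (-ε) (d t))) := le_max_right _ _
      have h7 : ((n:ℝ)+6) * ε * ‖d t‖^2 ≤ ((n:ℝ)+3) * ‖d t‖^2 := by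
        nlinarith [mul_nonneg (mul_nonneg (by positivity : (0:ℝ) ≤ (n:ℝ)+6)
            (by linarith : (0:ℝ) ≤ 1/2 - ε)) (sq_nonneg ‖d t‖),
          mul_nonneg (by exact_mod_cast Nat.cast_nonneg (α := ℝ) n : (0:ℝ) ≤ (n:ℝ))
            (sq_nonneg ‖d t‖)]
      refine max_le (by positivity) ?_
      nlinarith [sq_nonneg ‖d t‖]
    have hfle : f t ≤ Real.sqrt ((n:ℝ)+7) * ‖d t‖ := by
      rw [hfdef]
      refine (Real.sqrt_le_sqrt hmb).trans ?_
      rw [Real.sqrt_mul (by positivity), Real.sqrt_sq (norm_nonneg _)]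
    rw [Real.norm_eq_abs, abs_of_nonneg (Real.sqrt_nonneg _)]
    refine hfle.trans ?_
    exact mul_le_mul_of_nonneg_left htL (Real.sqrt_nonneg _)
  have hfint : IntegrableOn f (Icc a b) volume :=
    Integrable.mono' (hconst _) hfm hfb
  have hhb : ∀ᵐ t ∂(volume.restrict (Icc a b)), ‖h t‖ ≤ 2 * (L:ℝ) := by
    filter_upwards [hdbound] with t htL
    have hq := etaQ_max_bound n hε0.le hεhalf (d t)
    have hhle : h t ≤ 2 * ‖d t‖ := by
      rw [hhdef]
      refine (Real.sqrt_le_sqrt hq).trans ?_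
      rw [show (4:ℝ) * ‖d t‖^2 = (2*‖d t‖)^2 by ring, Real.sqrt_sq (by positivity)]
    rw [Real.norm_eq_abs, abs_of_nonneg (Real.sqrt_nonneg _)]
    exact hhle.trans (by linarith)
  have hhint : IntegrableOn h (Icc a b) volume :=
    Integrable.mono' (hconst _) hhm hhb
  -- interval integrability
  have hfI : IntervalIntegrable f volume a b := by
    rw [intervalIntegrable_iff_integrableOn_Icc_of_le hab]; exact hfint
  have hhI : IntervalIntegrable h volume a b := by
    rw [intervalIntegrable_iff_integrableOn_Icc_of_le hab]; exact hhint
  -- final chain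
  have hLg : Lg n g γ a b = ∫ t in a..b, f t := rfl
  have hLeta : Leta n (-ε) γ a b = ∫ t in a..b, h t := rfl
  have hLeuc : Leuc n γ a b = ∫ t in Ioc a b, ‖d t‖ := intervalIntegral.integral_of_le hab
  calc |Lg n g γ a b - Leta n (-ε) γ a b|
      = |∫ t in a..b, (f t - h t)| := by
        rw [hLg, hLeta, intervalIntegral.integral_sub hfI hhI]
    _ = |∫ t in Ioc a b, (f t - h t)| := by rw [intervalIntegral.integral_of_le hab]
    _ ≤ ∫ t in Ioc a b, |f t - h t| := by
        rw [← Real.norm_eq_abs]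
        exact (norm_integral_le_integral_norm _).trans_eq
          (by simp [Real.norm_eq_abs])
    _ ≤ ∫ t in Ioc a b, C * Real.sqrt ε * ‖d t‖ := by
        refine setIntegral_mono_on
          (IntegrableOn.mono_set ((hfint.sub hhint).abs) Ioc_subset_Icc_self)
          (IntegrableOn.mono_set (hnormint.const_mul _) Ioc_subset_Icc_self)
          measurableSet_Ioc (fun t ht => hptwise t (Ioc_subset_Icc_self ht))
    _ = C * Real.sqrt ε * ∫ t in Ioc a b, ‖d t‖ := integral_const_mul _ _
    _ = C * Real.sqrt ε * Leuc n γ a b := by rw [hLeuc]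
end
end

section
/- (Core step of Theorem A.5: achronal graphs are Lipschitz.) Let α > 0, let B = {b ∈ ℝⁿ : ‖b‖ < α/2} and let U = (−α,α) × B ⊆ ℝ^{n+1}, where a point of U is written (t,b) with t = X₀ and b the spatial coordinates. Let S ⊆ U and f : B → (−α,α) be such that for every b ∈ B: (t,b) ∈ S if and only if t = f(b). If S is achronal in U with respect to η^{3/5}, i.e. no η^{3/5}-timelike curve γ : [a,b] → U has both of its endpoints in S, then f is Lipschitz with constant 3: |f(b) − f(b')| ≤ 3‖b − b'‖ for all b,b' ∈ B. -/
open MeasureTheory Set Filter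

noncomputable section

/-- The point `(t, b) ∈ ℝ^{n+1}` with time coordinate `t` and spatial part `b`. -/
def mkpt (n : ℕ) (t : ℝ) (b : EuclideanSpace ℝ (Fin n)) : Esp n :=
  (WithLp.equiv 2 (∀ _ : Fin (n + 1), ℝ)).symm
    (Fin.cons t (WithLp.equiv 2 (∀ _ : Fin n, ℝ) b))


lemma AG_mkpt_sub (n : ℕ) (t t' : ℝ) (b b' : EuclideanSpace ℝ (Fin n)) :
    mkpt n t b - mkpt n t' b' = mkpt n (t - t') (b - b') := by
  ext i; induction i using Fin.cases <;> rfl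

lemma AG_mkpt_add (n : ℕ) (t t' : ℝ) (b b' : EuclideanSpace ℝ (Fin n)) :
    mkpt n t b + mkpt n t' b' = mkpt n (t + t') (b + b') := by
  ext i; induction i using Fin.cases <;> rfl

lemma AG_mkpt_smul (n : ℕ) (s t : ℝ) (b : EuclideanSpace ℝ (Fin n)) :
    s • mkpt n t b = mkpt n (s * t) (s • b) := by
  ext i; induction i using Fin.cases <;> rfl

lemma AG_erase_sum (n : ℕ) (g : Fin (n+1) → ℝ) :
    ∑ i ∈ Finset.univ.erase (0 : Fin (n + 1)), g i = ∑ i : Fin n, g i.succ := by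
  have h := Fin.sum_univ_succ g
  have h2 := Finset.add_sum_erase Finset.univ g (Finset.mem_univ (0 : Fin (n+1)))
  linarith

lemma AG_norm_sq (n : ℕ) (b : EuclideanSpace ℝ (Fin n)) : ‖b‖ ^ 2 = ∑ i, (b i) ^ 2 := by
  rw [EuclideanSpace.norm_eq, Real.sq_sqrt (by positivity)]
  simp [sq_abs]

lemma AG_etaQ_mkpt (n : ℕ) (t : ℝ) (b : EuclideanSpace ℝ (Fin n)) :
    etaQ n (3/5) (mkpt n t b) = -(1/4) * t ^ 2 + ‖b‖ ^ 2 := by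
  have h0 : (mkpt n t b) 0 = t := rfl
  have h1 : ∀ i : Fin n, (mkpt n t b) i.succ = b i := fun i => rfl
  rw [etaQ, AG_erase_sum, h0, AG_norm_sq]
  simp only [h1]
  norm_num

lemma AG_affine_lip (n : ℕ) (p v : Esp n) :
    LipschitzWith ‖v‖₊ (fun s : ℝ => p + s • v) := by
  apply LipschitzWith.of_dist_le_mul
  intro x y
  have h : p + x • v - (p + y • v) = (x - y) • v := by module
  rw [dist_eq_norm, Real.dist_eq, h, norm_smul, Real.norm_eq_abs, coe_nnnorm, mul_comm]

lemma AG_affine_hasDeriv (n : ℕ) (p v : Esp n) (t : ℝ) :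
    HasDerivAt (fun s : ℝ => p + s • v) v t := by
  simpa using ((hasDerivAt_id t).smul_const v).const_add p

lemma AG_key (n : ℕ) (a : ℝ) (ha : 0 < a)
    (U : Set (Esp n))
    (hUdef : U = {x | ∃ t : ℝ, ∃ b : EuclideanSpace ℝ (Fin n),
        |t| < a ∧ ‖b‖ < a / 2 ∧ x = mkpt n t b})
    (S : Set (Esp n))
    (f : EuclideanSpace ℝ (Fin n) → ℝ)
    (hrange : ∀ b : EuclideanSpace ℝ (Fin n), ‖b‖ < a / 2 → |f b| < a)
    (hgraph : ∀ t : ℝ, ∀ b : EuclideanSpace ℝ (Fin n), |t| < a → ‖b‖ < a / 2 →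
        (mkpt n t b ∈ S ↔ t = f b))
    (hach : ∀ a' b' : ℝ, a' < b' → ∀ γ : ℝ → Esp n,
        EtaTimelikeOn n (3 / 5) γ (Icc a' b') → MapsTo γ (Icc a' b') U →
        γ a' ∈ S → γ b' ∈ S → False)
    (b b' : EuclideanSpace ℝ (Fin n)) (hb : ‖b‖ < a / 2) (hb' : ‖b'‖ < a / 2)
    (hlt : 3 * ‖b - b'‖ < f b - f b') : False := by
  set t₁ := f b' with ht₁def
  set t₂ := f b with ht₂def
  have ht₁ : |t₁| < a := hrange b' hb'
  have ht₂ : |t₂| < a := hrange b hb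
  have hnn : (0 : ℝ) ≤ ‖b - b'‖ := norm_nonneg _
  have hΔ : 0 < t₂ - t₁ := by linarith
  set p := mkpt n t₁ b' with hp
  set q := mkpt n t₂ b with hq
  have hqp : q - p = mkpt n (t₂ - t₁) (b - b') := AG_mkpt_sub n t₂ t₁ b b'
  set γ : ℝ → Esp n := fun s => p + s • (q - p) with hγ
  have hd : ∀ t : ℝ, deriv γ t = q - p := fun t => (AG_affine_hasDeriv n p (q - p) t).deriv
  have hdiff : ∀ t : ℝ, DifferentiableAt ℝ γ t :=
    fun t => (AG_affine_hasDeriv n p (q - p) t).differentiableAt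
  refine hach 0 1 one_pos γ ?_ ?_ ?_ ?_
  · refine ⟨fun K _ _ => ⟨‖q - p‖₊, (AG_affine_lip n p (q - p)).lipschitzOnWith⟩,
      5 * (t₂ - t₁) ^ 2 / 36, by positivity, ?_⟩
    refine Filter.Eventually.of_forall fun t => ⟨hdiff t, ?_, ?_⟩
    · rw [hd, hqp, AG_etaQ_mkpt]
      nlinarith
    · rw [hd, hqp]
      exact hΔ
  · intro s hs
    have hγs : γ s = mkpt n (t₁ + s * (t₂ - t₁)) (b' + s • (b - b')) := by
      show p + s • (q - p) = _
      rw [hqp, AG_mkpt_smul, hp, AG_mkpt_add]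
    rw [hUdef, hγs]
    refine ⟨_, _, ?_, ?_, rfl⟩
    · have h1 : t₁ ≤ t₁ + s * (t₂ - t₁) := by nlinarith [hs.1, hs.2]
      have h2 : t₁ + s * (t₂ - t₁) ≤ t₂ := by nlinarith [hs.1, hs.2]
      rw [abs_lt] at ht₁ ht₂ ⊢
      constructor <;> linarith
    · have hcomb : b' + s • (b - b') = (1 - s) • b' + s • b := by module
      have := (convex_ball (0 : EuclideanSpace ℝ (Fin n)) (a / 2))
        (mem_ball_zero_iff.mpr hb') (mem_ball_zero_iff.mpr hb)
        (by linarith [hs.2] : (0:ℝ) ≤ 1 - s) hs.1 (by ring)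
      rw [hcomb]
      exact mem_ball_zero_iff.mp this
  · have : γ 0 = p := by simp [hγ]
    rw [this]
    exact (hgraph t₁ b' ht₁ hb').mpr rfl
  · have : γ 1 = q := by simp [hγ]
    rw [this]
    exact (hgraph t₂ b ht₂ hb).mpr rfl

/-- Core step of Theorem A.5: achronal graphs are Lipschitz (with constant 3). -/
theorem stmt_18 (n : ℕ) (hn : 1 ≤ n) (a : ℝ) (ha : 0 < a)
    (U : Set (Esp n))
    (hUdef : U = {x | ∃ t : ℝ, ∃ b : EuclideanSpace ℝ (Fin n),
        |t| < a ∧ ‖b‖ < a / 2 ∧ x = mkpt n t b})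
    (S : Set (Esp n)) (hSU : S ⊆ U)
    (f : EuclideanSpace ℝ (Fin n) → ℝ)
    (hrange : ∀ b : EuclideanSpace ℝ (Fin n), ‖b‖ < a / 2 → |f b| < a)
    (hgraph : ∀ t : ℝ, ∀ b : EuclideanSpace ℝ (Fin n), |t| < a → ‖b‖ < a / 2 →
        (mkpt n t b ∈ S ↔ t = f b))
    (hach : ∀ a' b' : ℝ, a' < b' → ∀ γ : ℝ → Esp n,
        EtaTimelikeOn n (3 / 5) γ (Icc a' b') → MapsTo γ (Icc a' b') U →
        γ a' ∈ S → γ b' ∈ S → False) :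
    ∀ b b' : EuclideanSpace ℝ (Fin n), ‖b‖ < a / 2 → ‖b'‖ < a / 2 →
      |f b - f b'| ≤ 3 * ‖b - b'‖ := by
  intro b b' hb hb'
  rw [abs_sub_le_iff]
  constructor
  · by_contra h
    push_neg at h
    exact AG_key n a ha U hUdef S f hrange hgraph hach b b' hb hb' h
  · by_contra h
    push_neg at h
    rw [norm_sub_rev] at h
    exact AG_key n a ha U hUdef S f hrange hgraph hach b' b hb' hb h
end
end
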